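/- arXiv:2203.00318 — 5 statements merged into one kernel-verified Lean document; each statement's English description precedes it below -/
import Mathlib

section
/- Let α > 0, β ≥ 0, h > 0 and let c be a real number with 0 < c < α/2 + β/h². Then for every a ∈ (0, 2π) and every complex number z satisfying z² + (α − (β/h²)(e^{ia} − 1))·z − α·c·(e^{ia} − 1) = 0, the real part of z is strictly negative. (This is the linear stability of the uniform steady state of the single-lane model under the condition V'(h) < α/2 + β/h², with c = V'(h).) -/
/-!
With `b = β / h²` and `ζ = e^{ia}`, the characteristic equation can be rewritten as
`z² + (α + b) z + α c = ζ (b z + α c)`, and `|ζ| = 1` then forces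
`|z² + (α + b) z + α c| = |b z + α c|`. For `Re z ≥ 0` and `z ≠ 0` the left side is strictly
larger: the difference of the squared moduli is a sum of terms that are nonnegative there, and
`c < α/2 + b` is exactly what makes the `(Im z)²` term nonnegative. The root `z = 0` only
occurs when `ζ = 1`, i.e. for the excluded mode `a = 0`.
-/

open Complex

lemma Complex.exp_ofReal_mul_I_ne_one {a : ℝ} (ha : a ∈ Set.Ioo 0 (2 * Real.pi)) :
    exp (a * I) ≠ 1 := by
  intro h
  have hexp : Circle.exp a = Circle.exp 0 := Circle.ext <| by simpa [Circle.coe_exp] using h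
  exact ha.1.ne' <| Circle.exp_injOn_Ico (by simp) (Set.Ioo_subset_Ico_self ha)
    ⟨le_rfl, Real.two_pi_pos⟩ hexp

section

variable {α b c : ℝ} {z : ℂ}

lemma norm_lt_norm_of_re_nonneg (hα : 0 < α) (hb : 0 ≤ b) (hc0 : 0 < c) (hc : c < α / 2 + b)
    (hz : z ≠ 0) (hre : 0 ≤ z.re) :
    ‖(b : ℂ) * z + α * c‖ < ‖z ^ 2 + (α + b) * z + α * c‖ := by
  rw [← sq_lt_sq₀ (norm_nonneg _) (norm_nonneg _), ← normSq_eq_norm_sq, ← normSq_eq_norm_sq]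
  set x := z.re
  set y := z.im
  have hxy : 0 < x ∨ y ≠ 0 := by
    by_contra! h
    exact hz (Complex.ext (le_antisymm h.1 hre) h.2)
  have hdiff : normSq (z ^ 2 + (α + b) * z + α * c) - normSq ((b : ℂ) * z + α * c) =
      (x ^ 2 + y ^ 2) ^ 2 + 2 * (α + b) * x * (x ^ 2 + y ^ 2)
        + (α ^ 2 + 2 * α * b + 2 * α * c) * x ^ 2 + 2 * α ^ 2 * c * x
        + 2 * α * (α / 2 + b - c) * y ^ 2 := by
    simp only [normSq_apply, pow_two, mul_re, mul_im, add_re, add_im, ofReal_re, ofReal_im]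
    ring
  have hgap : 0 < α / 2 + b - c := by linarith
  rw [← sub_pos, hdiff]
  generalize α / 2 + b - c = g at hgap
  rcases hxy with hx | hy <;> positivity

lemma re_neg_of_charPoly_eq_zero (hα : 0 < α) (hb : 0 ≤ b) (hc0 : 0 < c) (hc : c < α / 2 + b)
    {ζ : ℂ} (hζ : ‖ζ‖ = 1) (hζ1 : ζ ≠ 1)
    (hroot : z ^ 2 + (α - b * (ζ - 1)) * z - α * c * (ζ - 1) = 0) : z.re < 0 := by
  have hrot : z ^ 2 + (α + b) * z + α * c = ζ * (b * z + α * c) := by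
    linear_combination hroot
  have hz : z ≠ 0 := by
    rintro rfl
    have hαc : (α * c : ℂ) ≠ 0 := by exact_mod_cast (mul_pos hα hc0).ne'
    exact hζ1 (mul_right_cancel₀ hαc (by simpa using hrot.symm))
  by_contra! hre
  have hlt := norm_lt_norm_of_re_nonneg hα hb hc0 hc hz hre
  rw [hrot, norm_mul, hζ, one_mul] at hlt
  exact hlt.false

end

theorem single_lane_stability_general
    (α β h c : ℝ) (hα : 0 < α) (hβ : 0 ≤ β)
    (hc0 : 0 < c) (hc : c < α / 2 + β / h ^ 2) :
    ∀ a ∈ Set.Ioo (0 : ℝ) (2 * Real.pi), ∀ z : ℂ,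
      z ^ 2 + ((α : ℂ) - ((β : ℂ) / (h : ℂ) ^ 2) * (Complex.exp (Complex.I * a) - 1)) * z
          - (α : ℂ) * (c : ℂ) * (Complex.exp (Complex.I * a) - 1) = 0 →
      z.re < 0 := by
  intro a ha z hroot
  rw [mul_comm I] at hroot
  refine re_neg_of_charPoly_eq_zero hα (div_nonneg hβ (sq_nonneg h)) hc0 hc
    (norm_exp_ofReal_mul_I a) (exp_ofReal_mul_I_ne_one ha) ?_
  push_cast
  exact hroot

/-- Linear stability of the uniform steady state of the single-lane model:
if `0 < c < α/2 + β/h²` (with `c = V'(h)`), then for every Fourier mode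
`a ∈ (0, 2π)` all roots of the characteristic quadratic
`z² + (α - (β/h²)(e^{ia} - 1)) z - α c (e^{ia} - 1) = 0`
have strictly negative real part. -/
theorem single_lane_stability
    (α β h c : ℝ) (hα : 0 < α) (hβ : 0 ≤ β) (hh : 0 < h)
    (hc0 : 0 < c) (hc : c < α / 2 + β / h ^ 2) :
    ∀ a ∈ Set.Ioo (0 : ℝ) (2 * Real.pi), ∀ z : ℂ,
      z ^ 2 + ((α : ℂ) - ((β : ℂ) / (h : ℂ) ^ 2) * (Complex.exp (Complex.I * a) - 1)) * z
          - (α : ℂ) * (c : ℂ) * (Complex.exp (Complex.I * a) - 1) = 0 →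
      z.re < 0 :=
  single_lane_stability_general α β h c hα hβ hc0 hc
end

section
/- Let α > 0, β ≥ 0, h > 0, c > 0 and a ∈ (0, 2π) with a ≠ π. If z ∈ ℂ has Re(z) = 0 and satisfies z² + (α − (β/h²)(e^{ia} − 1))·z − α·c·(e^{ia} − 1) = 0, then c = α/(2cos²(a/2)) + β/h² + 2tan²(a/2)·(β/h²)·(β/(αh²) + 1). That is, a purely imaginary root of the characteristic quadratic can occur only on the critical curve. -/
open Real Complex

/-!
Write the root as `z = y i` with `y` real and put `s = sin (a/2)`, `t = cos (a/2)`, so that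
`e^{ia} - 1 = -2 s² + 2 s t i`. The imaginary part of the quadratic is linear in `y` and gives
`y (α + 2 b s²) = 2 α c s t` with `b = β/h²`; substituting this into the real part and cancelling
`2 α c s²` leaves `2 α c t² = 2 b t² D + D²` with `D = α + 2 b s²`, which is the critical curve
solved for `c`.
-/

lemma re_exp_I_mul_sub_one (a : ℝ) :
    (exp (I * a) - 1).re = -2 * Real.sin (a / 2) ^ 2 := by
  have hcos : Real.cos a = Real.cos (2 * (a / 2)) := by ring_nf
  rw [sub_re, one_re, mul_comm, exp_ofReal_mul_I_re, hcos, Real.cos_two_mul]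
  linear_combination 2 * Real.sin_sq_add_cos_sq (a / 2)

lemma im_exp_I_mul_sub_one (a : ℝ) :
    (exp (I * a) - 1).im = 2 * Real.sin (a / 2) * Real.cos (a / 2) := by
  have hsin : Real.sin a = Real.sin (2 * (a / 2)) := by ring_nf
  rw [sub_im, one_im, sub_zero, mul_comm, exp_ofReal_mul_I_im, hsin, Real.sin_two_mul]

lemma mul_I_root_iff (α b c y : ℝ) (w : ℂ) :
    ((y : ℂ) * I) ^ 2 + ((α : ℂ) - b * w) * (y * I) - α * c * w = 0 ↔
      y ^ 2 = b * w.im * y - α * c * w.re ∧ (α - b * w.re) * y = α * c * w.im := by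
  rw [Complex.ext_iff]
  simp only [sq, add_re, sub_re, add_im, sub_im, mul_re, mul_im, ofReal_re, ofReal_im,
    I_re, I_im, zero_re, zero_im]
  constructor <;> rintro ⟨hre, him⟩ <;> constructor <;> linarith

lemma critical_relation_of_parts {α b c s t y : ℝ} (hα : α ≠ 0) (hc : c ≠ 0) (hs : s ≠ 0)
    (hre : y ^ 2 = 2 * b * s * t * y + 2 * α * c * s ^ 2)
    (him : (α + 2 * b * s ^ 2) * y = 2 * α * c * s * t) :
    2 * α * c * t ^ 2 = 2 * b * t ^ 2 * (α + 2 * b * s ^ 2) + (α + 2 * b * s ^ 2) ^ 2 := by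
  set D := α + 2 * b * s ^ 2
  refine mul_left_cancel₀ (by positivity : 2 * α * c * s ^ 2 ≠ 0) ?_
  linear_combination D ^ 2 * hre - (y * D + 2 * α * c * s * t - 2 * b * s * t * D) * him

lemma eq_critical_curve {α b c s t : ℝ} (hα : α ≠ 0) (hD : α + 2 * b * s ^ 2 ≠ 0)
    (hst : s ^ 2 + t ^ 2 = 1)
    (h : 2 * α * c * t ^ 2 = 2 * b * t ^ 2 * (α + 2 * b * s ^ 2) + (α + 2 * b * s ^ 2) ^ 2) :
    c = α / (2 * t ^ 2) + b + 2 * (s / t) ^ 2 * b * (b / α + 1) := by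
  have ht : t ≠ 0 := by
    rintro rfl
    exact hD (pow_eq_zero_iff two_ne_zero |>.1 (by linear_combination -h))
  field_simp
  linear_combination h + 4 * s ^ 2 * b ^ 2 * hst

theorem critical_curve_of_purely_imaginary_root_general
    (α β h c : ℝ) (hα : 0 < α) (hβ : 0 ≤ β) (hc : 0 < c)
    (a : ℝ) (ha : a ∈ Set.Ioo (0 : ℝ) (2 * Real.pi))
    (z : ℂ) (hre : z.re = 0)
    (hz : z ^ 2 + ((α : ℂ) - ((β : ℂ) / (h : ℂ) ^ 2) * (Complex.exp (Complex.I * a) - 1)) * z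
        - (α : ℂ) * (c : ℂ) * (Complex.exp (Complex.I * a) - 1) = 0) :
    c = α / (2 * Real.cos (a / 2) ^ 2) + β / h ^ 2
        + 2 * Real.tan (a / 2) ^ 2 * (β / h ^ 2) * (β / (α * h ^ 2) + 1) := by
  have hz_eq : z = (z.im : ℂ) * I := Complex.ext (by simp [hre]) (by simp)
  have hs : 0 < Real.sin (a / 2) :=
    Real.sin_pos_of_pos_of_lt_pi (by linarith [ha.1]) (by linarith [ha.2])
  rw [hz_eq, show (β : ℂ) / (h : ℂ) ^ 2 = ((β / h ^ 2 : ℝ) : ℂ) by push_cast; rfl,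
    mul_I_root_iff, re_exp_I_mul_sub_one, im_exp_I_mul_sub_one] at hz
  rw [Real.tan_eq_sin_div_cos, show β / (α * h ^ 2) = β / h ^ 2 / α by ring]
  have hD : 0 < α + 2 * (β / h ^ 2) * Real.sin (a / 2) ^ 2 := by positivity
  refine eq_critical_curve hα.ne' hD.ne' (Real.sin_sq_add_cos_sq _) ?_
  exact critical_relation_of_parts (y := z.im) hα.ne' hc.ne' hs.ne'
    (by linear_combination hz.1) (by linear_combination hz.2)

/-- A purely imaginary root of the characteristic quadratic
`z² + (α - (β/h²)(e^{ia} - 1)) z - α c (e^{ia} - 1) = 0`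
can occur only on the critical curve
`c = α/(2 cos²(a/2)) + β/h² + 2 tan²(a/2) (β/h²)(β/(α h²) + 1)`. -/
theorem critical_curve_of_purely_imaginary_root
    (α β h c : ℝ) (hα : 0 < α) (hβ : 0 ≤ β) (hh : 0 < h) (hc : 0 < c)
    (a : ℝ) (ha : a ∈ Set.Ioo (0 : ℝ) (2 * Real.pi)) (haπ : a ≠ Real.pi)
    (z : ℂ) (hre : z.re = 0)
    (hz : z ^ 2 + ((α : ℂ) - ((β : ℂ) / (h : ℂ) ^ 2) * (Complex.exp (Complex.I * a) - 1)) * z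
        - (α : ℂ) * (c : ℂ) * (Complex.exp (Complex.I * a) - 1) = 0) :
    c = α / (2 * Real.cos (a / 2) ^ 2) + β / h ^ 2
        + 2 * Real.tan (a / 2) ^ 2 * (β / h ^ 2) * (β / (α * h ^ 2) + 1) :=
  critical_curve_of_purely_imaginary_root_general α β h c hα hβ hc a ha z hre hz
end

section
/- Let α > 0, β ≥ 0, h > 0 and let c be a real number with c > α/2 + β/h². Then there exists a₀ ∈ (0, π) such that for every a ∈ (0, a₀) there exists z ∈ ℂ with Re(z) > 0 satisfying z² + (α − (β/h²)(e^{ia} − 1))·z − α·c·(e^{ia} − 1) = 0. In particular, for all sufficiently large numbers N of vehicles the mode a = 2π/N is linearly unstable, so the uniform steady state is unstable when V'(h) > α/2 + β/h². -/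
/-!
If the roots of `z² + b z + d` are `z₁, z₂`, then the real quantity
`b.re² d.re + b.re b.im d.im − d.im²` equals `Re z₁ Re z₂ · |z₁ + conj z₂|²`, so it is
nonnegative as soon as neither root lies in the open right half-plane. For the characteristic
coefficients at mode `a`, with `K = β/h²` and `u = 1 − cos a`, this quantity is
`α c u (α (α + 2K − 2c) + u (αK + 2K² + αc))`, which is negative for all small `u > 0`
precisely when `c > α/2 + K`.
-/

open Real Complex

def quadraticHurwitzDet (b d : ℂ) : ℝ :=
  b.re ^ 2 * d.re + b.re * b.im * d.im - d.im ^ 2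

lemma quadraticHurwitzDet_neg_add_mul (z₁ z₂ : ℂ) :
    quadraticHurwitzDet (-(z₁ + z₂)) (z₁ * z₂) =
      z₁.re * z₂.re * ((z₁.re + z₂.re) ^ 2 + (z₁.im - z₂.im) ^ 2) := by
  simp only [quadraticHurwitzDet, neg_re, neg_im, add_re, add_im, mul_re, mul_im]
  ring

lemma Complex.exists_eq_neg_add_and_eq_mul (b d : ℂ) :
    ∃ z₁ z₂ : ℂ, b = -(z₁ + z₂) ∧ d = z₁ * z₂ := by
  obtain ⟨w, hw⟩ := IsAlgClosed.exists_pow_nat_eq (b ^ 2 - 4 * d) two_pos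
  exact ⟨(-b + w) / 2, (-b - w) / 2, by ring, by linear_combination (1 / 4 : ℂ) * hw⟩

lemma exists_root_re_pos_of_quadraticHurwitzDet_neg {b d : ℂ}
    (h : quadraticHurwitzDet b d < 0) : ∃ z : ℂ, 0 < z.re ∧ z ^ 2 + b * z + d = 0 := by
  obtain ⟨z₁, z₂, rfl, rfl⟩ := Complex.exists_eq_neg_add_and_eq_mul b d
  by_contra! hle
  have h₁ : z₁.re ≤ 0 := le_of_not_gt fun hz => hle z₁ hz (by ring)
  have h₂ : z₂.re ≤ 0 := le_of_not_gt fun hz => hle z₂ hz (by ring)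
  rw [quadraticHurwitzDet_neg_add_mul] at h
  have : 0 ≤ z₁.re * z₂.re := mul_nonneg_of_nonpos_of_nonpos h₁ h₂
  nlinarith [sq_nonneg (z₁.re + z₂.re), sq_nonneg (z₁.im - z₂.im)]

lemma quadraticHurwitzDet_charCoeffs (α K c a : ℝ) :
    quadraticHurwitzDet (α - K * (exp (I * a) - 1)) (-(α * c * (exp (I * a) - 1))) =
      α * c * (1 - Real.cos a) *
        (α * (α + 2 * K - 2 * c) + (1 - Real.cos a) * (α * K + 2 * K ^ 2 + α * c)) := by
  have hre : (exp (I * a)).re = Real.cos a := by rw [mul_comm, exp_ofReal_mul_I_re]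
  have him : (exp (I * a)).im = Real.sin a := by rw [mul_comm, exp_ofReal_mul_I_im]
  simp only [quadraticHurwitzDet, sub_re, sub_im, neg_re, neg_im, mul_re, mul_im,
    ofReal_re, ofReal_im, one_re, one_im, hre, him]
  linear_combination α * c * (K * (α + K * (1 - Real.cos a)) - α * c) * Real.sin_sq_add_cos_sq a

lemma exists_forall_one_sub_cos_mem_Ioo {t : ℝ} (ht : 0 < t) :
    ∃ a₀ ∈ Set.Ioo 0 π, ∀ a ∈ Set.Ioo 0 a₀, 1 - Real.cos a ∈ Set.Ioo 0 t := by
  refine ⟨min 1 √(2 * t), ⟨by positivity, (min_le_left _ _).trans_lt (by linarith [pi_gt_three])⟩,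
    fun a ⟨ha₀, ha⟩ => ⟨?_, ?_⟩⟩
  · have hapi : a ≤ π := by linarith [(lt_min_iff.mp ha).1, pi_gt_three]
    linarith [cos_lt_cos_of_nonneg_of_le_pi le_rfl hapi ha₀, Real.cos_zero]
  · have ha2 : a ^ 2 < 2 * t := (lt_sqrt ha₀.le).mp (lt_min_iff.mp ha).2
    linarith [one_sub_sq_div_two_le_cos (x := a)]

theorem instability_above_threshold_general
    (α β h c : ℝ) (hα : 0 < α) (hβ : 0 ≤ β)
    (hc : α / 2 + β / h ^ 2 < c) :
    ∃ a₀ ∈ Set.Ioo (0 : ℝ) Real.pi, ∀ a ∈ Set.Ioo (0 : ℝ) a₀,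
      ∃ z : ℂ, 0 < z.re ∧
        z ^ 2 + ((α : ℂ) - ((β : ℂ) / (h : ℂ) ^ 2) * (Complex.exp (Complex.I * a) - 1)) * z
          - (α : ℂ) * (c : ℂ) * (Complex.exp (Complex.I * a) - 1) = 0 := by
  set K := β / h ^ 2
  have hK : 0 ≤ K := by positivity
  have hcpos : 0 < c := by linarith
  have hD : 0 < α * K + 2 * K ^ 2 + α * c := by positivity
  have hmargin : 0 < α * (2 * c - α - 2 * K) := mul_pos hα (by linarith)
  obtain ⟨a₀, ha₀, hsmall⟩ := exists_forall_one_sub_cos_mem_Ioo (div_pos hmargin hD)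
  refine ⟨a₀, ha₀, fun a ha => ?_⟩
  obtain ⟨hu, hut⟩ := hsmall a ha
  have hdet : quadraticHurwitzDet (α - K * (exp (I * a) - 1)) (-(α * c * (exp (I * a) - 1)))
      < 0 := by
    rw [quadraticHurwitzDet_charCoeffs]
    refine mul_neg_of_pos_of_neg (by positivity) ?_
    nlinarith [(lt_div_iff₀ hD).mp hut]
  obtain ⟨z, hz, hroot⟩ := exists_root_re_pos_of_quadraticHurwitzDet_neg hdet
  exact ⟨z, hz, by push_cast [K] at hroot; linear_combination hroot⟩

/-- Instability above the global threshold: if `c > α/2 + β/h²` (with `c = V'(h)`),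
then there exists `a₀ ∈ (0, π)` such that every Fourier mode `a ∈ (0, a₀)` is linearly
unstable, i.e. the characteristic quadratic has a root with strictly positive real part.
In particular, for all sufficiently large numbers `N` of vehicles the mode `a = 2π/N`
is linearly unstable. -/
theorem instability_above_threshold
    (α β h c : ℝ) (hα : 0 < α) (hβ : 0 ≤ β) (hh : 0 < h)
    (hc : α / 2 + β / h ^ 2 < c) :
    ∃ a₀ ∈ Set.Ioo (0 : ℝ) Real.pi, ∀ a ∈ Set.Ioo (0 : ℝ) a₀,
      ∃ z : ℂ, 0 < z.re ∧
        z ^ 2 + ((α : ℂ) - ((β : ℂ) / (h : ℂ) ^ 2) * (Complex.exp (Complex.I * a) - 1)) * z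
          - (α : ℂ) * (c : ℂ) * (Complex.exp (Complex.I * a) - 1) = 0 :=
  instability_above_threshold_general α β h c hα hβ hc
end

section
/- Let α > 0, β ≥ 0, d_s > 0, and let h̄₁, h̄₂ be real numbers with 2·d_s < h̄₁. Suppose V₁, V₂ : ℝ → ℝ with V₁ strictly increasing on (d_s, ∞) and V₁(h̄₁) = V₂(h̄₂). Then for every d₁ ∈ (d_s, h̄₁ − d_s), α·(V₁(d₁) − V₂(h̄₂)) + (β/d₁²)·(V₁(h̄₁) − V₂(h̄₂)) < 0. Hence at the two-lane equilibrium the incentive criterion for a lane change from lane 2 to lane 1 is never satisfied, and the equilibrium configuration produces no lane changes. -/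
lemma StrictMonoOn.lt_of_mem_Ioo_sub {V : ℝ → ℝ} {ds h d : ℝ} (hV : StrictMonoOn V (Set.Ioi ds))
    (hds : 0 < ds) (hd : d ∈ Set.Ioo ds (h - ds)) : V d < V h :=
  hV hd.1 (Set.mem_Ioi.2 (by linarith [hd.1, hd.2])) (by linarith [hd.2])

theorem no_lane_change_two_to_one_at_equilibrium_general
    (α β ds h₁ h₂ : ℝ) (hα : 0 < α) (hds : 0 < ds)
    (V₁ V₂ : ℝ → ℝ)
    (hV₁ : StrictMonoOn V₁ (Set.Ioi ds))
    (heq : V₁ h₁ = V₂ h₂) :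
    ∀ d₁ ∈ Set.Ioo ds (h₁ - ds),
      α * (V₁ d₁ - V₂ h₂) + (β / d₁ ^ 2) * (V₁ h₁ - V₂ h₂) < 0 := by
  intro d₁ hd₁
  have hslower : V₁ d₁ - V₂ h₂ < 0 := by
    rw [← heq, sub_neg]
    exact hV₁.lt_of_mem_Ioo_sub hds hd₁
  rw [heq, sub_self, mul_zero, add_zero]
  exact mul_neg_of_pos_of_neg hα hslower

/-- At the two-lane equilibrium (lane 1 with headway `h̄₁`, lane 2 with headway `h̄₂`,
common velocity `V₁(h̄₁) = V₂(h̄₂)`), the incentive criterion for a lane change from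
lane 2 to lane 1 is never satisfied: for every admissible gap `d₁ ∈ (d_s, h̄₁ - d_s)`,
the acceleration gain `α (V₁(d₁) - V₂(h̄₂)) + (β/d₁²)(V₁(h̄₁) - V₂(h̄₂))` is negative.
Hence the equilibrium configuration produces no lane changes. -/
theorem no_lane_change_two_to_one_at_equilibrium
    (α β ds h₁ h₂ : ℝ) (hα : 0 < α) (hβ : 0 ≤ β) (hds : 0 < ds)
    (hh₁ : 2 * ds < h₁)
    (V₁ V₂ : ℝ → ℝ)
    (hV₁ : StrictMonoOn V₁ (Set.Ioi ds))
    (heq : V₁ h₁ = V₂ h₂) :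
    ∀ d₁ ∈ Set.Ioo ds (h₁ - ds),
      α * (V₁ d₁ - V₂ h₂) + (β / d₁ ^ 2) * (V₁ h₁ - V₂ h₂) < 0 :=
  no_lane_change_two_to_one_at_equilibrium_general α β ds h₁ h₂ hα hds V₁ V₂ hV₁ heq
end

section
/- Let α > 0, β ≥ 0, d_s > 0, ε ≥ 0, and let h̄₁, h̄₂ ∈ ℝ with 2·d_s < h̄₁. Suppose V₁, V₂ : ℝ → ℝ with V₁ strictly increasing on (d_s, ∞), V₂ nondecreasing on [h̄₂, ∞), and V₁(h̄₁) = V₂(h̄₂). Then for every d₁ ∈ (d_s, h̄₁ − d_s), α·(V₁(d₁) − V₂(h̄₂ + ε)) + (β/d₁²)·(V₁(h̄₁) − V₂(h̄₂ + ε)) < 0. Hence a nonnegative perturbation of the headways of lane 2 never activates lane changes from lane 2 to lane 1. -/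
lemma mul_sub_add_mul_sub_neg {α k a b c : ℝ} (hα : 0 < α) (hk : 0 ≤ k)
    (hab : a < b) (hbc : b ≤ c) : α * (a - c) + k * (b - c) < 0 :=
  add_neg_of_neg_of_nonpos (mul_neg_of_pos_of_neg hα (by linarith))
    (mul_nonpos_of_nonneg_of_nonpos hk (by linarith))

theorem no_lane_change_two_to_one_nonnegative_perturbation_general
    (α β ds ε h₁ h₂ : ℝ) (hα : 0 < α) (hβ : 0 ≤ β) (hds : 0 < ds) (hε : 0 ≤ ε)
    (V₁ V₂ : ℝ → ℝ)
    (hV₁ : StrictMonoOn V₁ (Set.Ioi ds))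
    (hV₂ : MonotoneOn V₂ (Set.Ici h₂))
    (heq : V₁ h₁ = V₂ h₂) :
    ∀ d₁ ∈ Set.Ioo ds (h₁ - ds),
      α * (V₁ d₁ - V₂ (h₂ + ε)) + (β / d₁ ^ 2) * (V₁ h₁ - V₂ (h₂ + ε)) < 0 := by
  rintro d₁ ⟨hds_lt, hlt_sub⟩
  have hd₁h₁ : d₁ < h₁ := by linarith
  refine mul_sub_add_mul_sub_neg hα (by positivity) (hV₁ hds_lt (hds_lt.trans hd₁h₁) hd₁h₁) ?_
  calc V₁ h₁ = V₂ h₂ := heq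
    _ ≤ V₂ (h₂ + ε) :=
      hV₂ Set.self_mem_Ici (le_add_of_nonneg_right hε) (le_add_of_nonneg_right hε)

/-- A nonnegative perturbation `ε ≥ 0` of the headways of lane 2 (vehicles travelling
at `V₂(h̄₂ + ε)`) never activates lane changes from lane 2 to lane 1: for every
admissible gap `d₁ ∈ (d_s, h̄₁ - d_s)` in lane 1, the acceleration gain
`α (V₁(d₁) - V₂(h̄₂+ε)) + (β/d₁²)(V₁(h̄₁) - V₂(h̄₂+ε))` is negative. -/
theorem no_lane_change_two_to_one_nonnegative_perturbation
    (α β ds ε h₁ h₂ : ℝ) (hα : 0 < α) (hβ : 0 ≤ β) (hds : 0 < ds) (hε : 0 ≤ ε)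
    (hh₁ : 2 * ds < h₁)
    (V₁ V₂ : ℝ → ℝ)
    (hV₁ : StrictMonoOn V₁ (Set.Ioi ds))
    (hV₂ : MonotoneOn V₂ (Set.Ici h₂))
    (heq : V₁ h₁ = V₂ h₂) :
    ∀ d₁ ∈ Set.Ioo ds (h₁ - ds),
      α * (V₁ d₁ - V₂ (h₂ + ε)) + (β / d₁ ^ 2) * (V₁ h₁ - V₂ (h₂ + ε)) < 0 :=
  no_lane_change_two_to_one_nonnegative_perturbation_general α β ds ε h₁ h₂ hα hβ hds hε V₁ V₂ hV₁
    hV₂ heq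
end
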